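/- Let G be a simple connected graph such that ν(G \ x) = ν(G) for every vertex x. Then G is factor-critical, i.e., G \ x has a perfect matching for every vertex x (Gallai's lemma); in particular |V(G)| = 2ν(G) + 1. -/

import Mathlib

open scoped Classical

/-- `M` is a matching of `G`, given as a finite set of edges. -/
def IsMatchingFinset {V : Type*} (G : SimpleGraph V) (M : Finset (Sym2 V)) : Prop :=
  (M : Set (Sym2 V)) ⊆ G.edgeSet ∧
    ∀ e ∈ M, ∀ f ∈ M, e ≠ f → ∀ v : V, ¬(v ∈ e ∧ v ∈ f)

/-- ν(G): the maximum size of a matching of `G`. -/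
noncomputable def matchingNumber {V : Type*} (G : SimpleGraph V) : ℕ :=
  sSup {n | ∃ M : Finset (Sym2 V), IsMatchingFinset G M ∧ M.card = n}

/-- A proper edge coloring of `G` using colors `< n`. -/
def IsProperEdgeColoring {V : Type*} (G : SimpleGraph V) (n : ℕ) (c : Sym2 V → ℕ) : Prop :=
  (∀ e ∈ G.edgeSet, c e < n) ∧
    ∀ e ∈ G.edgeSet, ∀ f ∈ G.edgeSet, e ≠ f → (∃ v : V, v ∈ e ∧ v ∈ f) → c e ≠ c f

/-- χ'(G): the edge chromatic index of `G`. -/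
noncomputable def chromaticIndex {V : Type*} (G : SimpleGraph V) : ℕ :=
  sInf {n | ∃ c : Sym2 V → ℕ, IsProperEdgeColoring G n c}

/-- `G` is friendly-edge-colorable: its edge set is partitioned into maximum matchings. -/
noncomputable def Friendly {V : Type*} [Fintype V] (G : SimpleGraph V) : Prop :=
  ∃ P : Finset (Finset (Sym2 V)),
    (∀ M ∈ P, IsMatchingFinset G M ∧ M.card = matchingNumber G) ∧
    (∀ e, e ∈ G.edgeFinset ↔ ∃ M ∈ P, e ∈ M) ∧
    ∀ M ∈ P, ∀ N ∈ P, M ≠ N → Disjoint M N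

/-- The graph `G` with vertex `x` deleted. -/
def delVert {V : Type*} (G : SimpleGraph V) (x : V) : SimpleGraph {v : V // v ≠ x} :=
  G.induce {v : V | v ≠ x}

/-- `G` has a perfect matching. -/
def HasPerfectMatchingFinset {V : Type*} (G : SimpleGraph V) : Prop :=
  ∃ M : Finset (Sym2 V), IsMatchingFinset G M ∧ ∀ v : V, ∃ e ∈ M, v ∈ e

/-- `G` is factor-critical. -/
def FactorCritical {V : Type*} (G : SimpleGraph V) : Prop :=
  G.Connected ∧ ∀ x : V, HasPerfectMatchingFinset (delVert G x)

/-!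
Every vertex is missed by some maximum matching. Suppose a maximum matching `M` missed two
vertices `u ≠ v`, with `dist u v` minimal among all such configurations. They are not adjacent,
so let `t` be the neighbour of `u` on a shortest `u`–`v` path and `N` a maximum matching missing
`t`. Since `M` has no augmenting path, `v` is not in the set `C` of vertices reachable from `u`
along edges of `M ∪ N`. Taking `M` on `C` and `N` off `C`, or the other way round, gives two
matchings with `2ν` edges in total, so both are maximum; one of them misses `t` together with
`u` or `v`, which are closer. Hence every maximum matching misses exactly one vertex, so
`|V| = 2ν + 1`, and a maximum matching of `G \ x`, which has `ν` edges, is perfect.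
-/

open Finset

section Matchings

variable {V : Type*} {G : SimpleGraph V} {M N : Finset (Sym2 V)} {u v w : V}

def IsUnmatched (M : Finset (Sym2 V)) (v : V) : Prop := ∀ e ∈ M, v ∉ e

structure IsMaximumMatchingFinset (G : SimpleGraph V) (M : Finset (Sym2 V)) : Prop where
  isMatchingFinset : IsMatchingFinset G M
  card_eq : #M = matchingNumber G

lemma IsUnmatched.mono (hv : IsUnmatched M v) (hNM : N ⊆ M) : IsUnmatched N v :=
  fun e he => hv e (hNM he)

lemma isUnmatched_insert {a b : V} :
    IsUnmatched (insert s(a, b) M) w ↔ IsUnmatched M w ∧ w ≠ a ∧ w ≠ b := by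
  simp only [IsUnmatched, mem_insert, forall_eq_or_imp, Sym2.mem_iff, not_or]
  tauto

lemma IsMatchingFinset.mono (hM : IsMatchingFinset G M) (hNM : N ⊆ M) : IsMatchingFinset G N :=
  ⟨(coe_subset.2 hNM).trans hM.1, fun e he f hf => hM.2 e (hNM he) f (hNM hf)⟩

lemma IsMatchingFinset.isUnmatched_erase (hM : IsMatchingFinset G M) {e : Sym2 V} (he : e ∈ M)
    (hu : u ∈ e) : IsUnmatched (M.erase e) u :=
  fun f hf huf => hM.2 f (mem_of_mem_erase hf) e he (ne_of_mem_erase hf) u ⟨huf, hu⟩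

lemma IsMatchingFinset.insert_edge (hM : IsMatchingFinset G M) (huv : G.Adj u v)
    (hu : IsUnmatched M u) (hv : IsUnmatched M v) : IsMatchingFinset G (insert s(u, v) M) := by
  refine ⟨?_, ?_⟩
  · rw [coe_insert, Set.insert_subset_iff]
    exact ⟨huv, hM.1⟩
  · have key : ∀ f ∈ M, ∀ x, ¬(x ∈ s(u, v) ∧ x ∈ f) := by
      rintro f hf x ⟨hx, hxf⟩
      rcases Sym2.mem_iff.1 hx with rfl | rfl
      exacts [hu f hf hxf, hv f hf hxf]
    intro e he f hf hef x
    rcases mem_insert.1 he with rfl | he <;> rcases mem_insert.1 hf with rfl | hf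
    · exact absurd rfl hef
    · exact key f hf x
    · exact fun hx => key e he x hx.symm
    · exact hM.2 e he f hf hef x

lemma card_insert_of_isUnmatched (hu : IsUnmatched M u) : #(insert s(u, v) M) = #M + 1 :=
  card_insert_of_notMem fun h => hu _ h (Sym2.mem_mk_left u v)

lemma IsMatchingFinset.exchange (hM : IsMatchingFinset G M) {a b c : V} (ha : IsUnmatched M a)
    (hab : G.Adj a b) (hbc : s(b, c) ∈ M) :
    IsMatchingFinset G (insert s(a, b) (M.erase s(b, c))) ∧
      #(insert s(a, b) (M.erase s(b, c))) = #M := by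
  have ha' := ha.mono (erase_subset s(b, c) M)
  refine ⟨(hM.mono (erase_subset _ M)).insert_edge hab ha'
    (hM.isUnmatched_erase hbc (Sym2.mem_mk_left b c)), ?_⟩
  rw [card_insert_of_isUnmatched ha', card_erase_of_mem hbc]
  exact Nat.sub_add_cancel (card_pos.2 ⟨_, hbc⟩)

lemma IsMatchingFinset.map {W : Type*} {H : SimpleGraph W} {M : Finset (Sym2 W)} (f : H ↪g G)
    (hM : IsMatchingFinset H M) : IsMatchingFinset G (M.map f.toEmbedding.sym2Map) := by
  refine ⟨?_, ?_⟩
  · rintro _ hmem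
    obtain ⟨e, he, rfl⟩ := mem_map.1 hmem
    exact f.map_mem_edgeSet_iff.2 (hM.1 he)
  · rintro _ hmem _ hmem' hne x ⟨hxe, hxe'⟩
    obtain ⟨e, he, rfl⟩ := mem_map.1 hmem
    obtain ⟨e', he', rfl⟩ := mem_map.1 hmem'
    obtain ⟨a, ha, rfl⟩ := Sym2.mem_map.1 hxe
    obtain ⟨b, hb, hba⟩ := Sym2.mem_map.1 hxe'
    obtain rfl := f.injective hba
    exact hM.2 e he e' he' (fun h => hne (h ▸ rfl)) b ⟨ha, hb⟩

noncomputable def matchedVerts (M : Finset (Sym2 V)) : Finset V := M.biUnion Sym2.toFinset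

lemma mem_matchedVerts : v ∈ matchedVerts M ↔ ∃ e ∈ M, v ∈ e := by
  simp [matchedVerts]

lemma notMem_matchedVerts : v ∉ matchedVerts M ↔ IsUnmatched M v := by
  simp [mem_matchedVerts, IsUnmatched]

lemma IsMatchingFinset.card_matchedVerts (hM : IsMatchingFinset G M) :
    #(matchedVerts M) = 2 * #M := by
  rw [matchedVerts, card_biUnion, mul_comm, ← smul_eq_mul, ← sum_const]
  · exact sum_congr rfl fun e he =>
      Sym2.card_toFinset_of_not_isDiag e (G.not_isDiag_of_mem_edgeSet (hM.1 he))
  · intro e he f hf hef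
    exact disjoint_left.2 fun x hxe hxf =>
      hM.2 e he f hf hef x ⟨Sym2.mem_toFinset.1 hxe, Sym2.mem_toFinset.1 hxf⟩

variable [Fintype V]

lemma bddAbove_card_isMatchingFinset (G : SimpleGraph V) :
    BddAbove {n | ∃ M, IsMatchingFinset G M ∧ #M = n} :=
  ⟨Fintype.card (Sym2 V), by rintro _ ⟨M, -, rfl⟩; exact card_le_univ M⟩

lemma IsMatchingFinset.card_le_matchingNumber (hM : IsMatchingFinset G M) :
    #M ≤ matchingNumber G :=
  le_csSup (bddAbove_card_isMatchingFinset G) ⟨M, hM, rfl⟩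

lemma exists_isMaximumMatchingFinset (G : SimpleGraph V) :
    ∃ M, IsMaximumMatchingFinset G M :=
  let ⟨M, hM, hcard⟩ := Nat.sSup_mem (s := {n | ∃ M, IsMatchingFinset G M ∧ #M = n})
    ⟨0, ∅, ⟨by simp, by simp⟩, rfl⟩ (bddAbove_card_isMatchingFinset G)
  ⟨M, hM, hcard⟩

lemma exists_isUnmatched_card_eq_matchingNumber_delVert (G : SimpleGraph V) (x : V) :
    ∃ M, IsMatchingFinset G M ∧ #M = matchingNumber (delVert G x) ∧ IsUnmatched M x := by
  obtain ⟨M, hM, hcard⟩ := exists_isMaximumMatchingFinset (delVert G x)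
  refine ⟨_, hM.map (SimpleGraph.Embedding.induce _), by rw [card_map, hcard], ?_⟩
  intro e he hxe
  obtain ⟨e, -, rfl⟩ := mem_map.1 he
  obtain ⟨a, -, hax⟩ := Sym2.mem_map.1 hxe
  exact a.2 hax

lemma IsMaximumMatchingFinset.not_adj (hM : IsMaximumMatchingFinset G M)
    (hu : IsUnmatched M u) (hv : IsUnmatched M v) : ¬G.Adj u v := fun huv => by
  have := (hM.isMatchingFinset.insert_edge huv hu hv).card_le_matchingNumber
  rw [card_insert_of_isUnmatched hu, hM.card_eq] at this
  omega

lemma IsMatchingFinset.two_mul_card_add_one_le (hM : IsMatchingFinset G M)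
    (hv : IsUnmatched M v) : 2 * #M + 1 ≤ Fintype.card V := by
  rw [← hM.card_matchedVerts, ← card_univ]
  exact card_lt_card (ssubset_of_subset_of_ne (subset_univ _)
    fun h => notMem_matchedVerts.2 hv (h ▸ mem_univ v))

lemma IsMatchingFinset.card_le_two_mul_add_one (hM : IsMatchingFinset G M)
    (huniq : ∀ u v, IsUnmatched M u → IsUnmatched M v → u = v) :
    Fintype.card V ≤ 2 * #M + 1 := by
  have hunm : #(univ \ matchedVerts M) ≤ 1 := card_le_one.2 fun u hu v hv =>
    huniq u v (notMem_matchedVerts.1 (mem_sdiff.1 hu).2)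
      (notMem_matchedVerts.1 (mem_sdiff.1 hv).2)
  rw [card_sdiff_of_subset (subset_univ _), card_univ, hM.card_matchedVerts] at hunm
  omega

lemma IsMatchingFinset.covers_of_card_eq (hM : IsMatchingFinset G M)
    (hcard : Fintype.card V = 2 * #M) : ∀ v, ∃ e ∈ M, v ∈ e := by
  rw [← hM.card_matchedVerts, ← card_univ] at hcard
  exact fun v => mem_matchedVerts.1 (eq_univ_of_card _ hcard.symm ▸ mem_univ v)

end Matchings

section Augmenting

variable {V : Type*} {G : SimpleGraph V} {N : Finset (Sym2 V)}

theorem IsMatchingFinset.exists_card_eq_add_one_of_isPath {H : SimpleGraph V}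
    (hN : IsMatchingFinset G N) :
    ∀ {u v : V} (p : H.Walk u v) {M : Finset (Sym2 V)}, p.IsPath → IsMatchingFinset G M →
      (∀ e ∈ p.edges, e ∈ M ∪ N) → IsUnmatched M u → IsUnmatched M v → u ≠ v →
      ∃ M', IsMatchingFinset G M' ∧ #M' = #M + 1
  | _, _, .nil, _, _, _, _, _, _, huv => absurd rfl huv
  | a, _, .cons (v := b) _ .nil, M, _, hM, hedges, ha, hb, _ => by
    have habN : s(a, b) ∈ N := (mem_union.1 (hedges _ (by simp))).resolve_left
      fun h => ha _ h (Sym2.mem_mk_left a b)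
    exact ⟨_, hM.insert_edge (hN.1 habN) ha hb, card_insert_of_isUnmatched ha⟩
  | a, v, .cons (v := b) _ (.cons (v := c) _ p), M, hpath, hM, hedges, ha, hv, hav => by
    simp only [SimpleGraph.Walk.cons_isPath_iff, SimpleGraph.Walk.support_cons,
      List.mem_cons, not_or] at hpath
    obtain ⟨⟨hp, hbp⟩, hab, hap⟩ := hpath
    have hac : a ≠ c := fun h => hap (h ▸ p.start_mem_support)
    have habN : s(a, b) ∈ N := (mem_union.1 (hedges _ (by simp))).resolve_left
      fun h => ha _ h (Sym2.mem_mk_left a b)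
    have hbcM : s(b, c) ∈ M := (mem_union.1 (hedges _ (by simp))).resolve_right fun h =>
      hN.2 _ habN _ h (by simp [hac, hab]) b ⟨Sym2.mem_mk_right a b, Sym2.mem_mk_left b c⟩
    -- trade the `M`-edge `bc` for the `N`-edge `ab`; the walk then continues from the new
    -- unmatched vertex `c`
    obtain ⟨hM₁, hcard⟩ := hM.exchange ha (hN.1 habN) hbcM
    set M₁ := insert s(a, b) (M.erase s(b, c))
    have hc : IsUnmatched M₁ c := isUnmatched_insert.2
      ⟨hM.isUnmatched_erase hbcM (Sym2.mem_mk_right b c), hac.symm,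
        fun h => hbp (h ▸ p.start_mem_support)⟩
    have hv₁ : IsUnmatched M₁ v := isUnmatched_insert.2
      ⟨hv.mono (erase_subset _ M), hav.symm, fun h => hbp (h ▸ p.end_mem_support)⟩
    have hedges₁ : ∀ e ∈ p.edges, e ∈ M₁ ∪ N := by
      intro e he
      rcases mem_union.1 (hedges e (by simp [he])) with heM | heN
      · refine mem_union_left _ (mem_insert_of_mem (mem_erase.2 ⟨?_, heM⟩))
        rintro rfl
        exact hbp (p.fst_mem_support_of_mem_edges he)
      · exact mem_union_right _ heN
    have hcv : c ≠ v := fun h => hv _ hbcM (h ▸ Sym2.mem_mk_right b c)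
    obtain ⟨M', hM', hcard'⟩ :=
      hN.exists_card_eq_add_one_of_isPath p hp hM₁ hedges₁ hc hv₁ hcv
    exact ⟨M', hM', hcard' ▸ hcard ▸ rfl⟩

lemma IsMaximumMatchingFinset.not_reachable [Fintype V] (hM : IsMaximumMatchingFinset G M)
    (hN : IsMatchingFinset G N) (hu : IsUnmatched M u) (hv : IsUnmatched M v) (huv : u ≠ v) :
    ¬(SimpleGraph.fromEdgeSet (↑(M ∪ N) : Set (Sym2 V))).Reachable u v := by
  rintro ⟨p⟩
  have hedges : ∀ e ∈ p.toPath.1.edges, e ∈ M ∪ N := fun e he => by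
    have := p.toPath.1.edges_subset_edgeSet he
    rw [SimpleGraph.edgeSet_fromEdgeSet] at this
    exact mem_coe.1 this.1
  obtain ⟨M', hM', hcard⟩ := hN.exists_card_eq_add_one_of_isPath p.toPath.1 p.toPath.2
    hM.isMatchingFinset hedges hu hv huv
  have := hM'.card_le_matchingNumber
  rw [hcard, hM.card_eq] at this
  omega

end Augmenting

section Piecewise

variable {V : Type*} {G : SimpleGraph V} {A B : Finset (Sym2 V)} {C : Set V} {x : V}

noncomputable def edgePiecewise (C : Set V) (A B : Finset (Sym2 V)) : Finset (Sym2 V) :=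
  A.filter (fun e => ∃ x ∈ e, x ∈ C) ∪ B.filter (fun e => ¬∃ x ∈ e, x ∈ C)

lemma card_edgePiecewise_add_card_edgePiecewise (C : Set V) (A B : Finset (Sym2 V)) :
    #(edgePiecewise C A B) + #(edgePiecewise C B A) = #A + #B := by
  have hdisj : ∀ A' B' : Finset (Sym2 V), Disjoint (A'.filter (fun e => ∃ x ∈ e, x ∈ C))
      (B'.filter (fun e => ¬∃ x ∈ e, x ∈ C)) := fun A' B' =>
    disjoint_left.2 fun _ h h' => (mem_filter.1 h').2 (mem_filter.1 h).2
  rw [edgePiecewise, edgePiecewise, card_union_of_disjoint (hdisj A B),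
    card_union_of_disjoint (hdisj B A),
    ← card_filter_add_card_filter_not (s := A) (fun e => ∃ x ∈ e, x ∈ C),
    ← card_filter_add_card_filter_not (s := B) (fun e => ∃ x ∈ e, x ∈ C)]
  omega

variable (hC : ∀ e ∈ A ∪ B, ∀ x ∈ e, ∀ y ∈ e, x ∈ C → y ∈ C)
include hC

lemma isMatchingFinset_edgePiecewise (hA : IsMatchingFinset G A) (hB : IsMatchingFinset G B) :
    IsMatchingFinset G (edgePiecewise C A B) := by
  have key : ∀ e ∈ A.filter (fun e => ∃ x ∈ e, x ∈ C),
      ∀ f ∈ B.filter (fun e => ¬∃ x ∈ e, x ∈ C), ∀ w, ¬(w ∈ e ∧ w ∈ f) := by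
    intro e he f hf w ⟨hwe, hwf⟩
    obtain ⟨heA, y, hye, hyC⟩ := mem_filter.1 he
    exact (mem_filter.1 hf).2 ⟨w, hwf, hC e (mem_union_left _ heA) y hye w hwe hyC⟩
  refine ⟨?_, ?_⟩
  · rw [edgePiecewise, coe_union]
    exact Set.union_subset ((coe_subset.2 (filter_subset _ _)).trans hA.1)
      ((coe_subset.2 (filter_subset _ _)).trans hB.1)
  · intro e he f hf hef w
    rcases mem_union.1 he with he | he <;> rcases mem_union.1 hf with hf | hf
    · exact hA.2 e (mem_filter.1 he).1 f (mem_filter.1 hf).1 hef w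
    · exact key e he f hf w
    · exact fun h => key f hf e he w h.symm
    · exact hB.2 e (mem_filter.1 he).1 f (mem_filter.1 hf).1 hef w

lemma isMaximumMatchingFinset_edgePiecewise [Fintype V] (hA : IsMaximumMatchingFinset G A)
    (hB : IsMaximumMatchingFinset G B) : IsMaximumMatchingFinset G (edgePiecewise C A B) := by
  have hAB := isMatchingFinset_edgePiecewise hC hA.isMatchingFinset hB.isMatchingFinset
  have hBA := (isMatchingFinset_edgePiecewise
    (fun e he => hC e (mem_union.2 (mem_union.1 he).symm)) hB.isMatchingFinset
    hA.isMatchingFinset).card_le_matchingNumber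
  have hsum := card_edgePiecewise_add_card_edgePiecewise C A B
  have := hAB.card_le_matchingNumber
  refine ⟨hAB, ?_⟩
  rw [hA.card_eq, hB.card_eq] at hsum
  omega

omit hC in
lemma isUnmatched_edgePiecewise_of_mem (hx : x ∈ C) (hA : IsUnmatched A x) :
    IsUnmatched (edgePiecewise C A B) x := by
  intro e he hxe
  rcases mem_union.1 he with he | he
  · exact hA e (mem_filter.1 he).1 hxe
  · exact (mem_filter.1 he).2 ⟨x, hxe, hx⟩

lemma isUnmatched_edgePiecewise_of_notMem (hx : x ∉ C) (hB : IsUnmatched B x) :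
    IsUnmatched (edgePiecewise C A B) x := by
  intro e he hxe
  rcases mem_union.1 he with he | he
  · obtain ⟨heA, y, hye, hyC⟩ := mem_filter.1 he
    exact hx (hC e (mem_union_left _ heA) y hye x hxe hyC)
  · exact hB e (mem_filter.1 he).1 hxe

end Piecewise

section Gallai

open SimpleGraph

variable {V : Type*} {G : SimpleGraph V} {M : Finset (Sym2 V)} {u v x y : V}

lemma SimpleGraph.Reachable.trans_mem_fromEdgeSet {s : Set (Sym2 V)} {e : Sym2 V}
    (h : (fromEdgeSet s).Reachable u x) (he : e ∈ s) (hx : x ∈ e) (hy : y ∈ e) :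
    (fromEdgeSet s).Reachable u y := by
  obtain rfl | hxy := eq_or_ne x y
  · exact h
  · obtain rfl := (Sym2.mem_and_mem_iff hxy).1 ⟨hx, hy⟩
    exact h.trans ((fromEdgeSet_adj s).2 ⟨he, hxy⟩).reachable

lemma SimpleGraph.Connected.exists_adj_dist_lt (hconn : G.Connected) (huv : u ≠ v) :
    ∃ t, G.Adj u t ∧ G.dist t v < G.dist u v := by
  obtain ⟨p, hp⟩ := hconn.exists_walk_length_eq_dist u v
  cases p with
  | nil => exact absurd rfl huv
  | cons hut q =>
    rw [Walk.length_cons] at hp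
    exact ⟨_, hut, (dist_le q).trans_lt (by omega)⟩

variable [Fintype V]

lemma IsMaximumMatchingFinset.exists_isUnmatched_dist_lt (hconn : G.Connected)
    (hmiss : ∀ t, ∃ N, IsMaximumMatchingFinset G N ∧ IsUnmatched N t)
    (hM : IsMaximumMatchingFinset G M) (hu : IsUnmatched M u) (hv : IsUnmatched M v)
    (huv : u ≠ v) : ∃ M' u' v', IsMaximumMatchingFinset G M' ∧ IsUnmatched M' u' ∧
      IsUnmatched M' v' ∧ u' ≠ v' ∧ G.dist u' v' < G.dist u v := by
  have hnadj := hM.not_adj hu hv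
  obtain ⟨t, hut, htv⟩ := hconn.exists_adj_dist_lt huv
  have hdut : G.dist u t < G.dist u v := by
    rw [dist_eq_one_iff_adj.2 hut]
    exact hconn.one_lt_dist_of_ne_of_not_adj huv hnadj
  obtain ⟨N, hN, ht⟩ := hmiss t
  set C := {x | (fromEdgeSet (↑(M ∪ N) : Set (Sym2 V))).Reachable u x}
  have hC : ∀ e ∈ M ∪ N, ∀ x ∈ e, ∀ y ∈ e, x ∈ C → y ∈ C :=
    fun e he x hx y hy hxC => Reachable.trans_mem_fromEdgeSet hxC (mem_coe.2 he) hx hy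
  have hC' : ∀ e ∈ N ∪ M, ∀ x ∈ e, ∀ y ∈ e, x ∈ C → y ∈ C :=
    union_comm M N ▸ hC
  have hvC : v ∉ C := hM.not_reachable hN.isMatchingFinset hu hv huv
  by_cases htC : t ∈ C
  · refine ⟨edgePiecewise C N M, t, v, isMaximumMatchingFinset_edgePiecewise hC' hN hM,
      isUnmatched_edgePiecewise_of_mem htC ht, isUnmatched_edgePiecewise_of_notMem hC' hvC hv,
      ?_, htv⟩
    rintro rfl
    exact hnadj hut
  · exact ⟨edgePiecewise C M N, u, t, isMaximumMatchingFinset_edgePiecewise hC hM hN,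
      isUnmatched_edgePiecewise_of_mem (Reachable.refl u) hu,
      isUnmatched_edgePiecewise_of_notMem hC htC ht, hut.ne, hdut⟩

lemma IsMaximumMatchingFinset.eq_of_isUnmatched (hconn : G.Connected)
    (hmiss : ∀ t, ∃ N, IsMaximumMatchingFinset G N ∧ IsUnmatched N t)
    (hM : IsMaximumMatchingFinset G M) (hu : IsUnmatched M u) (hv : IsUnmatched M v) :
    u = v := by
  induction hd : G.dist u v using Nat.strong_induction_on generalizing M u v with
  | _ d ih =>
    by_contra huv
    obtain ⟨M', u', v', hM', hu', hv', huv', hlt⟩ :=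
      hM.exists_isUnmatched_dist_lt hconn hmiss hu hv huv
    exact huv' (ih _ (hd ▸ hlt) hM' hu' hv' rfl)

end Gallai

theorem stmt_19 {V : Type*} [Fintype V] (G : SimpleGraph V) (hconn : G.Connected)
    (h : ∀ x : V, matchingNumber (delVert G x) = matchingNumber G) :
    FactorCritical G ∧ Fintype.card V = 2 * matchingNumber G + 1 := by
  have hmiss : ∀ x, ∃ N, IsMaximumMatchingFinset G N ∧ IsUnmatched N x := fun x => by
    obtain ⟨N, hN, hcard, hx⟩ := exists_isUnmatched_card_eq_matchingNumber_delVert G x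
    exact ⟨N, ⟨hN, hcard.trans (h x)⟩, hx⟩
  obtain ⟨x₀⟩ := hconn.nonempty
  obtain ⟨N, hN, hx₀⟩ := hmiss x₀
  obtain ⟨M, hM⟩ := exists_isMaximumMatchingFinset G
  have hcard : Fintype.card V = 2 * matchingNumber G + 1 := le_antisymm
    (hM.card_eq ▸ hM.isMatchingFinset.card_le_two_mul_add_one
      fun _ _ => hM.eq_of_isUnmatched hconn hmiss)
    (hN.card_eq ▸ hN.isMatchingFinset.two_mul_card_add_one_le hx₀)
  refine ⟨⟨hconn, fun x => ?_⟩, hcard⟩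
  obtain ⟨Mx, hMx⟩ := exists_isMaximumMatchingFinset (delVert G x)
  refine ⟨Mx, hMx.isMatchingFinset, hMx.isMatchingFinset.covers_of_card_eq ?_⟩
  simp only [hMx.card_eq, h x, ne_eq, Fintype.card_subtype_compl, Fintype.card_subtype_eq]
  omega
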